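/- Let S₀, S₁, ..., S_K be exchangeable real-valued random variables. Define the p-value p = (1 + #{k ∈ {1,...,K} : S_k ≥ S₀}) / (K + 1). Then for any α ∈ (0,1), P(p ≤ α) ≤ α. -/
import Mathlib


open MeasureTheory Finset
open scoped ENNReal

/-- Number of indices `k` with `x j ≤ x k` (including `k = j`). -/
noncomputable def rankCount {n : ℕ} (j : Fin n) (x : Fin n → ℝ) : ℕ :=
  (Finset.univ.filter (fun k => x j ≤ x k)).card

lemma rankCount_comp {n : ℕ} (σ : Equiv.Perm (Fin n)) (j : Fin n) (x : Fin n → ℝ) :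
    rankCount j (fun i => x (σ i)) = rankCount (σ j) x := by
  unfold rankCount
  apply Finset.card_bij' (fun k _ => σ k) (fun k _ => σ.symm k)
  · intro a ha
    simp only [mem_filter, mem_univ, true_and] at ha ⊢
    exact ha
  · intro a ha
    simp only [mem_filter, mem_univ, true_and, Equiv.apply_symm_apply] at ha ⊢
    exact ha
  · intro a _; simp
  · intro a _; simp

lemma rankCount_measurable {n : ℕ} (j : Fin n) : Measurable (rankCount j) := by
  unfold rankCount
  simp_rw [Finset.card_filter]
  exact Finset.measurable_sum _ (fun k _ =>
    Measurable.ite (measurableSet_le (measurable_pi_apply j) (measurable_pi_apply k))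
      measurable_const measurable_const)

lemma rankCount_card_le {n : ℕ} (x : Fin n → ℝ) (m : ℕ) :
    (Finset.univ.filter (fun j => rankCount j x ≤ m)).card ≤ m := by
  set A := Finset.univ.filter (fun j => rankCount j x ≤ m) with hA
  by_cases h : A.Nonempty
  · obtain ⟨j₀, hj₀A, hmin⟩ := Finset.exists_min_image A x h
    have hsub : A ⊆ Finset.univ.filter (fun k => x j₀ ≤ x k) :=
      fun k hk => mem_filter.2 ⟨mem_univ _, hmin k hk⟩
    calc A.card ≤ rankCount j₀ x := Finset.card_le_card hsub
      _ ≤ m := (mem_filter.1 hj₀A).2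
  · simp [Finset.not_nonempty_iff_eq_empty.1 h]

/-- Validity of the randomization p-value: if `S 0, S 1, ..., S K` are exchangeable,
then the p-value `p = (1 + #{k ∈ {1,...,K} : S k ≥ S 0}) / (K + 1)` satisfies
`P(p ≤ α) ≤ α` for every `α ∈ (0, 1)`. -/
theorem crt_pvalue_valid
    {Ω : Type*} [MeasurableSpace Ω] (μ : Measure Ω) [IsProbabilityMeasure μ]
    (K : ℕ) (S : Fin (K + 1) → Ω → ℝ)
    (hMeas : ∀ i, Measurable (S i))
    (hExch : ∀ σ : Equiv.Perm (Fin (K + 1)),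
      Measure.map (fun ω => fun i => S (σ i) ω) μ
        = Measure.map (fun ω => fun i => S i ω) μ)
    (α : ℝ) (hα0 : 0 < α) (hα1 : α < 1) :
    μ {ω | ((1 + (Finset.univ.filter
        (fun k : Fin (K + 1) => k ≠ 0 ∧ S 0 ω ≤ S k ω)).card : ℝ)) / (K + 1) ≤ α}
      ≤ ENNReal.ofReal α := by
  classical
  set m : ℕ := ⌊α * (K + 1)⌋₊ with hm
  set Svec : Ω → Fin (K + 1) → ℝ := fun ω i => S i ω with hSvec
  have hSvecMeas : Measurable Svec := measurable_pi_lambda _ hMeas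
  set A : Fin (K + 1) → Set Ω := fun j => Svec ⁻¹' {x | rankCount j x ≤ m} with hA
  have hBmeas : ∀ j : Fin (K + 1), MeasurableSet {x : Fin (K + 1) → ℝ | rankCount j x ≤ m} :=
    fun j => (rankCount_measurable j) (show MeasurableSet {n : ℕ | n ≤ m} from .of_discrete)
  have hAmeas : ∀ j, MeasurableSet (A j) := fun j => hSvecMeas (hBmeas j)
  have hKpos : (0 : ℝ) < (K : ℝ) + 1 := by positivity
  -- rankCount 0 of Svec ω equals 1 + the filtered card in the statement
  have hrank0 : ∀ ω, rankCount 0 (Svec ω) =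
      (Finset.univ.filter (fun k : Fin (K + 1) => k ≠ 0 ∧ S 0 ω ≤ S k ω)).card + 1 := by
    intro ω
    unfold rankCount
    have hset : Finset.univ.filter (fun k : Fin (K + 1) => Svec ω 0 ≤ Svec ω k) =
        insert (0 : Fin (K + 1))
          (Finset.univ.filter (fun k : Fin (K + 1) => k ≠ 0 ∧ S 0 ω ≤ S k ω)) := by
      ext k
      simp only [mem_filter, mem_univ, true_and, Finset.mem_insert, hSvec]
      constructor
      · intro hk
        by_cases h0 : k = 0
        · exact Or.inl h0
        · exact Or.inr ⟨h0, hk⟩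
      · rintro (rfl | ⟨_, hk⟩)
        · exact le_refl _
        · exact hk
    rw [hset, Finset.card_insert_of_notMem (by simp)]
  -- the target set is A 0
  have hsetEq : {ω | ((1 + (Finset.univ.filter
      (fun k : Fin (K + 1) => k ≠ 0 ∧ S 0 ω ≤ S k ω)).card : ℝ)) / (K + 1) ≤ α} = A 0 := by
    ext ω
    simp only [Set.mem_setOf_eq, hA, Set.mem_preimage, Set.mem_setOf_eq, hrank0 ω]
    rw [div_le_iff₀ hKpos]
    rw [Nat.le_floor_iff (by positivity)]
    constructor
    · intro h
      push_cast
      linarith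
    · intro h
      push_cast at h
      linarith
  -- all A j have the same measure
  have hsame : ∀ j : Fin (K + 1), μ (A j) = μ (A 0) := by
    intro j
    have hσ := hExch (Equiv.swap 0 j)
    have hmeasσ : Measurable (fun ω => fun i => S ((Equiv.swap 0 j) i) ω) :=
      measurable_pi_lambda _ (fun i => hMeas _)
    have h1 := congrArg (fun ν => ν {x : Fin (K + 1) → ℝ | rankCount 0 x ≤ m}) hσ
    rw [Measure.map_apply hmeasσ (hBmeas 0), Measure.map_apply hSvecMeas (hBmeas 0)] at h1
    have hpre : (fun ω => fun i => S ((Equiv.swap 0 j) i) ω) ⁻¹'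
        {x : Fin (K + 1) → ℝ | rankCount 0 x ≤ m} = A j := by
      ext ω
      simp only [Set.mem_preimage, Set.mem_setOf_eq, hA]
      have : (fun i => S ((Equiv.swap 0 j) i) ω) = (fun i => Svec ω ((Equiv.swap 0 j) i)) := rfl
      rw [this, rankCount_comp (Equiv.swap 0 j) 0 (Svec ω), Equiv.swap_apply_left]
    rw [hpre] at h1
    exact h1
  -- sum of measures bounded by m
  have hsum : ∑ j : Fin (K + 1), μ (A j) ≤ (m : ℝ≥0∞) := by
    have hind : ∀ j : Fin (K + 1), μ (A j) =
        ∫⁻ ω, (A j).indicator (fun _ => (1 : ℝ≥0∞)) ω ∂μ := by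
      intro j
      rw [lintegral_indicator (hAmeas j)]
      simp
    calc ∑ j : Fin (K + 1), μ (A j)
        = ∫⁻ ω, ∑ j : Fin (K + 1), (A j).indicator (fun _ => (1 : ℝ≥0∞)) ω ∂μ := by
          rw [lintegral_finset_sum _ (fun j _ => (measurable_const.indicator (hAmeas j)))]
          exact Finset.sum_congr rfl (fun j _ => hind j)
      _ ≤ ∫⁻ _, (m : ℝ≥0∞) ∂μ := by
          apply lintegral_mono
          intro ω
          dsimp only
          have : ∑ j : Fin (K + 1), (A j).indicator (fun _ => (1 : ℝ≥0∞)) ω =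
              ((Finset.univ.filter (fun j : Fin (K + 1) => ω ∈ A j)).card : ℝ≥0∞) := by
            simp only [Set.indicator_apply]
            rw [Finset.card_filter]
            push_cast
            exact Finset.sum_congr rfl (fun j _ => rfl)
          rw [this]
          have hc : (Finset.univ.filter (fun j : Fin (K + 1) => ω ∈ A j)).card ≤ m := by
            refine le_trans (Finset.card_le_card ?_) (rankCount_card_le (Svec ω) m)
            intro j hj
            simp only [mem_filter, mem_univ, true_and] at hj ⊢
            exact hj
          exact_mod_cast hc
      _ = (m : ℝ≥0∞) := by simp
  have hsum' : ((K : ℝ≥0∞) + 1) * μ (A 0) ≤ (m : ℝ≥0∞) := by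
    have : ∑ j : Fin (K + 1), μ (A j) = ((K : ℝ≥0∞) + 1) * μ (A 0) := by
      rw [Finset.sum_congr rfl (fun j _ => hsame j), Finset.sum_const, Finset.card_univ,
        Fintype.card_fin, nsmul_eq_mul]
      push_cast
      ring
    rw [← this]
    exact hsum
  have hmle : (m : ℝ≥0∞) ≤ ((K : ℝ≥0∞) + 1) * ENNReal.ofReal α := by
    have hr : (m : ℝ) ≤ ((K : ℝ) + 1) * α := by
      calc (m : ℝ) ≤ α * ((K : ℝ) + 1) := Nat.floor_le (by positivity)
        _ = ((K : ℝ) + 1) * α := by ring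
    calc (m : ℝ≥0∞) = ENNReal.ofReal (m : ℝ) := by simp
      _ ≤ ENNReal.ofReal (((K : ℝ) + 1) * α) := ENNReal.ofReal_le_ofReal hr
      _ = ENNReal.ofReal ((K : ℝ) + 1) * ENNReal.ofReal α := by
          rw [ENNReal.ofReal_mul (by positivity)]
      _ = ((K : ℝ≥0∞) + 1) * ENNReal.ofReal α := by
          congr 1
          rw [ENNReal.ofReal_add (by positivity) zero_le_one]
          simp
  rw [hsetEq]
  have hfin : ((K : ℝ≥0∞) + 1) ≠ ⊤ := by simp
  have h0 : ((K : ℝ≥0∞) + 1) ≠ 0 := by simp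
  have := le_trans hsum' hmle
  exact (ENNReal.mul_le_mul_iff_right h0 hfin).1 this
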